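/- arXiv:1203.1821 — 5 statements merged into one kernel-verified Lean document; each statement's English description precedes it below -/
import Mathlib

section
/- Let Q̃ be Hermitian positive definite and define F(X,Y) = Q + (V*XV + W*XW) − (U*YU + B*YB) on Hermitian matrices. Set δ = 2·max{‖Q̃^{−1/2}(V Q̃ V* + W Q̃ W*)Q̃^{−1/2}‖, ‖Q̃^{−1/2}(U Q̃ U* + B Q̃ B*)Q̃^{−1/2}‖}. Then for all Hermitian X ≥ J and Y ≤ K, ‖F(X,Y) − F(J,K)‖_{1,Q̃} ≤ (δ/2)(‖X − J‖_{1,Q̃} + ‖K − Y‖_{1,Q̃}). -/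
/-! With `S = Q̃^{1/2}`, the difference `F(X,Y) - F(J,K) = Φ(X - J) + Ψ(K - Y)` is a sum
of congruences of positive semidefinite matrices, where `Φ D = V*DV + W*DW` and
`Ψ E = U*EU + B*EB`. On positive semidefinite matrices the weighted trace norm is linear,
`‖P‖_{1,Q̃} = tr(P Q̃)`, so `‖Φ D‖_{1,Q̃} = tr(D Φ*(Q̃)) = tr(SDS · S⁻¹Φ*(Q̃)S⁻¹)` with
`Φ* Q = VQV* + WQW*`.
Since `M ≤ ‖M‖ • 1` for Hermitian `M`, `tr(PM) ≤ ‖M‖ tr P` for `P ≥ 0`, which bounds this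
by `‖S⁻¹Φ*(Q̃)S⁻¹‖ ‖D‖_{1,Q̃}`; likewise for `Ψ`. -/

open Matrix Filter
open scoped ComplexOrder

/-- The spectral norm (operator norm) of a complex matrix. -/
noncomputable def specNorm {N : ℕ} (A : Matrix (Fin N) (Fin N) ℂ) : ℝ :=
  ‖(Matrix.toEuclideanCLM (𝕜 := ℂ) A : EuclideanSpace ℂ (Fin N) →L[ℂ] EuclideanSpace ℂ (Fin N))‖

/-- The trace norm (sum of singular values) of a complex matrix. -/
noncomputable def traceNorm {N : ℕ} (A : Matrix (Fin N) (Fin N) ℂ) : ℝ :=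
  ∑ i, Real.sqrt ((Matrix.posSemidef_conjTranspose_mul_self A).1.eigenvalues i)

open scoped MatrixOrder

namespace Matrix

variable {n : Type*} [Fintype n]

lemma trace_conjTranspose_mul_mul_mul (A D C : Matrix n n ℂ) :
    (Aᴴ * D * A * C).trace = (D * (A * C * Aᴴ)).trace := by
  simp only [mul_assoc]
  rw [trace_mul_comm]
  simp only [mul_assoc]

lemma conjTranspose_conj_add_conj_nonneg {D : Matrix n n ℂ} (V W : Matrix n n ℂ)
    (hD : 0 ≤ D) : 0 ≤ Vᴴ * D * V + Wᴴ * D * W :=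
  add_nonneg (star_left_conjugate_nonneg hD V) (star_left_conjugate_nonneg hD W)

variable [DecidableEq n] {A : Matrix n n ℂ}

lemma PosSemidef.sqrt_eq (hA : A.PosSemidef) :
    CFC.sqrt A = (hA.1.eigenvectorUnitary : Matrix n n ℂ) *
      diagonal ((↑) ∘ Real.sqrt ∘ hA.1.eigenvalues) *
      (star hA.1.eigenvectorUnitary : Matrix n n ℂ) := by
  rw [CFC.sqrt_eq_real_sqrt A hA.nonneg, cfcₙ_eq_cfc, hA.1.cfc_eq, IsHermitian.cfc,
    Unitary.conjStarAlgAut_apply]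
  rfl

lemma PosSemidef.trace_sqrt (hA : A.PosSemidef) :
    (CFC.sqrt A).trace = ∑ i, (Real.sqrt (hA.1.eigenvalues i) : ℂ) := by
  rw [hA.sqrt_eq, trace_mul_cycle, Unitary.coe_star_mul_self, one_mul, trace_diagonal]
  rfl

end Matrix

section

variable {N : ℕ}

lemma traceNorm_nonneg (A : Matrix (Fin N) (Fin N) ℂ) : 0 ≤ traceNorm A :=
  Finset.sum_nonneg fun _ _ => Real.sqrt_nonneg _

lemma traceNorm_eq_trace_sqrt (A : Matrix (Fin N) (Fin N) ℂ) :
    (traceNorm A : ℂ) = (CFC.sqrt (Aᴴ * A)).trace := by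
  rw [(posSemidef_conjTranspose_mul_self A).trace_sqrt, traceNorm]
  push_cast
  rfl

lemma traceNorm_of_nonneg {A : Matrix (Fin N) (Fin N) ℂ} (hA : 0 ≤ A) :
    (traceNorm A : ℂ) = A.trace := by
  rw [traceNorm_eq_trace_sqrt, hA.posSemidef.1.eq, CFC.sqrt_mul_self A hA]

lemma traceNorm_add_of_nonneg {A B : Matrix (Fin N) (Fin N) ℂ} (hA : 0 ≤ A) (hB : 0 ≤ B) :
    traceNorm (A + B) = traceNorm A + traceNorm B := by
  have h := traceNorm_of_nonneg (add_nonneg hA hB)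
  rw [trace_add, ← traceNorm_of_nonneg hA, ← traceNorm_of_nonneg hB] at h
  exact_mod_cast h

section L2Operator

open scoped Matrix.Norms.L2Operator

lemma le_specNorm_smul_one {M : Matrix (Fin N) (Fin N) ℂ} (hM : IsSelfAdjoint M) :
    M ≤ (specNorm M : ℂ) • 1 := by
  have h := hM.le_algebraMap_norm_self
  rwa [Algebra.algebraMap_eq_smul_one] at h

end L2Operator

lemma trace_mul_le_specNorm_mul_trace {P M : Matrix (Fin N) (Fin N) ℂ} (hP : 0 ≤ P)
    (hM : IsSelfAdjoint M) : (P * M).trace ≤ specNorm M * P.trace := by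
  set R := CFC.sqrt P
  have hR : IsSelfAdjoint R := (CFC.sqrt_nonneg P).isSelfAdjoint
  have hRR : R * R = P := CFC.sqrt_mul_sqrt_self P hP
  have h := (sub_nonneg.mpr (hR.conjugate_le_conjugate (le_specNorm_smul_one hM))).posSemidef
  rw [mul_smul_comm, smul_mul_assoc, mul_one, hRR] at h
  have := h.trace_nonneg
  rwa [trace_sub, sub_nonneg, trace_smul, trace_mul_cycle, hRR, smul_eq_mul] at this

lemma trace_mul_le_specNorm_conj_mul_traceNorm {S P M : Matrix (Fin N) (Fin N) ℂ}
    (hS : IsSelfAdjoint S) (hSu : IsUnit S) (hP : 0 ≤ P) (hM : IsSelfAdjoint M) :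
    (P * M).trace ≤ specNorm (S⁻¹ * M * S⁻¹) * traceNorm (S * P * S) := by
  have hdet : IsUnit S.det := (isUnit_iff_isUnit_det S).mp hSu
  have htrace : (P * M).trace = ((S * P * S) * (S⁻¹ * M * S⁻¹)).trace := by
    rw [show S * P * S * (S⁻¹ * M * S⁻¹) = S * (P * M) * S⁻¹ by
      simp only [mul_assoc, mul_nonsing_inv_cancel_left _ _ hdet],
      trace_mul_cycle, ← mul_assoc, nonsing_inv_mul _ hdet, one_mul]
  rw [htrace, traceNorm_of_nonneg (hS.conjugate_nonneg hP)]
  exact trace_mul_le_specNorm_mul_trace (hS.conjugate_nonneg hP)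
    (hM.conjugate_self (IsHermitian.inv hS))

lemma traceNorm_conj_add_conj_le {S Q D V W : Matrix (Fin N) (Fin N) ℂ}
    (hS : IsSelfAdjoint S) (hSu : IsUnit S) (hSQ : S * S = Q) (hD : 0 ≤ D) :
    traceNorm (S * (Vᴴ * D * V + Wᴴ * D * W) * S) ≤
      specNorm (S⁻¹ * (V * Q * Vᴴ + W * Q * Wᴴ) * S⁻¹) * traceNorm (S * D * S) := by
  have hQ : IsSelfAdjoint Q := by
    rw [← hSQ]
    nth_rw 1 [← hS.star_eq]
    exact .star_mul_self S
  have htrace : (traceNorm (S * (Vᴴ * D * V + Wᴴ * D * W) * S) : ℂ) =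
      (D * (V * Q * Vᴴ + W * Q * Wᴴ)).trace := by
    rw [traceNorm_of_nonneg (hS.conjugate_nonneg (conjTranspose_conj_add_conj_nonneg V W hD)),
      trace_mul_cycle, hSQ, trace_mul_comm, add_mul, trace_add,
      trace_conjTranspose_mul_mul_mul, trace_conjTranspose_mul_mul_mul,
      ← trace_add, ← mul_add]
  have h := trace_mul_le_specNorm_conj_mul_traceNorm hS hSu hD
    ((isHermitian_mul_mul_conjTranspose V hQ).add (isHermitian_mul_mul_conjTranspose W hQ))
  rw [← htrace] at h
  exact_mod_cast h

end

theorem stmt5_general {N : ℕ} (B Q Qt : Matrix (Fin N) (Fin N) ℂ)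
    (hQt : Qt.PosDef)
    (U V W : Matrix (Fin N) (Fin N) ℂ)
    (F : Matrix (Fin N) (Fin N) ℂ → Matrix (Fin N) (Fin N) ℂ → Matrix (Fin N) (Fin N) ℂ)
    (hF : ∀ X Y, F X Y = Q + (Vᴴ * X * V + Wᴴ * X * W) - (Uᴴ * Y * U + Bᴴ * Y * B))
    (S : Matrix (Fin N) (Fin N) ℂ) (hS : S = (hQt.posSemidef.1.eigenvectorUnitary : Matrix (Fin N) (Fin N) ℂ) *
      diagonal ((↑) ∘ Real.sqrt ∘ hQt.posSemidef.1.eigenvalues) *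
      (star hQt.posSemidef.1.eigenvectorUnitary : Matrix (Fin N) (Fin N) ℂ))
    (δ : ℝ)
    (hδ : δ = 2 * max (specNorm (S⁻¹ * (V * Qt * Vᴴ + W * Qt * Wᴴ) * S⁻¹))
                      (specNorm (S⁻¹ * (U * Qt * Uᴴ + B * Qt * Bᴴ) * S⁻¹)))
    (X Y J K : Matrix (Fin N) (Fin N) ℂ)
    (hXJ : (X - J).PosSemidef) (hYK : (K - Y).PosSemidef) :
    traceNorm (S * (F X Y - F J K) * S) ≤
      δ / 2 * (traceNorm (S * (X - J) * S) + traceNorm (S * (K - Y) * S)) := by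
  have hQt0 : 0 ≤ Qt := hQt.posSemidef.nonneg
  rw [← hQt.posSemidef.sqrt_eq] at hS
  have hSa : IsSelfAdjoint S := hS ▸ (CFC.sqrt_nonneg Qt).isSelfAdjoint
  have hSu : IsUnit S := hS ▸ (CFC.isUnit_sqrt_iff Qt hQt0).mpr hQt.isUnit
  have hSQ : S * S = Qt := hS ▸ CFC.sqrt_mul_sqrt_self Qt hQt0
  have hΔ : F X Y - F J K = (Vᴴ * (X - J) * V + Wᴴ * (X - J) * W) +
      (Uᴴ * (K - Y) * U + Bᴴ * (K - Y) * B) := by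
    rw [hF, hF]; noncomm_ring
  have hsplit := traceNorm_add_of_nonneg
    (hSa.conjugate_nonneg (conjTranspose_conj_add_conj_nonneg V W hXJ.nonneg))
    (hSa.conjugate_nonneg (conjTranspose_conj_add_conj_nonneg U B hYK.nonneg))
  rw [← add_mul, ← mul_add, ← hΔ] at hsplit
  rw [hsplit, mul_add (δ / 2), hδ, mul_div_cancel_left₀ _ two_ne_zero]
  refine add_le_add ((traceNorm_conj_add_conj_le hSa hSu hSQ hXJ.nonneg).trans ?_)
    ((traceNorm_conj_add_conj_le hSa hSu hSQ hYK.nonneg).trans ?_)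
  · exact mul_le_mul_of_nonneg_right (le_max_left _ _) (traceNorm_nonneg _)
  · exact mul_le_mul_of_nonneg_right (le_max_right _ _) (traceNorm_nonneg _)

theorem stmt5 {N : ℕ} (A B Q Qt : Matrix (Fin N) (Fin N) ℂ)
    (hQ : Q.IsHermitian) (hQt : Qt.PosDef)
    (U V W : Matrix (Fin N) (Fin N) ℂ)
    (hU : U = ((Real.sqrt 2 : ℂ))⁻¹ • (A - B + 1))
    (hV : V = ((Real.sqrt 2 : ℂ))⁻¹ • (A + B + 1))
    (hW : W = B - 1)
    (F : Matrix (Fin N) (Fin N) ℂ → Matrix (Fin N) (Fin N) ℂ → Matrix (Fin N) (Fin N) ℂ)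
    (hF : ∀ X Y, F X Y = Q + (Vᴴ * X * V + Wᴴ * X * W) - (Uᴴ * Y * U + Bᴴ * Y * B))
    (S : Matrix (Fin N) (Fin N) ℂ) (hS : S = (hQt.posSemidef.1.eigenvectorUnitary : Matrix (Fin N) (Fin N) ℂ) *
      diagonal ((↑) ∘ Real.sqrt ∘ hQt.posSemidef.1.eigenvalues) *
      (star hQt.posSemidef.1.eigenvectorUnitary : Matrix (Fin N) (Fin N) ℂ))
    (δ : ℝ)
    (hδ : δ = 2 * max (specNorm (S⁻¹ * (V * Qt * Vᴴ + W * Qt * Wᴴ) * S⁻¹))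
                      (specNorm (S⁻¹ * (U * Qt * Uᴴ + B * Qt * Bᴴ) * S⁻¹)))
    (X Y J K : Matrix (Fin N) (Fin N) ℂ)
    (hX : X.IsHermitian) (hY : Y.IsHermitian) (hJ : J.IsHermitian) (hK : K.IsHermitian)
    (hXJ : (X - J).PosSemidef) (hYK : (K - Y).PosSemidef) :
    traceNorm (S * (F X Y - F J K) * S) ≤
      δ / 2 * (traceNorm (S * (X - J) * S) + traceNorm (S * (K - Y) * S)) :=
  stmt5_general B Q Qt hQt U V W F hF S hS δ hδ X Y J K hXJ hYK
end

section
/- Suppose there exist Hermitian positive definite N×N matrices Q̃ and M such that: (a) 2(U Q̃ U* + B Q̃ B*) < Q̃; (b) 2(V Q̃ V* + W Q̃ W*) < Q̃; (c) U*MU + B*MB < M − (V*MV + W*MW); and (d) U*MU + B*MB < Q < M − (V*MV + W*MW), where U = (A − B + I)/√2, V = (A + B + I)/√2, W = B − I. Then the equation A*XB + B*XA = −Q has exactly one Hermitian positive definite solution X̂. -/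
/-!
Put `P X = V* X V + W* X W` and `R X = U* X U + B* X B`. The choice of `U, V, W` makes
`P X - R X = A* X B + B* X A + X`, so the solutions are the fixed points of `X ↦ Q + P X - R X`.
By (a) and (b) the trace-adjoint of the positive map `P + R` maps `Q̃` strictly below `Q̃`; pairing
with `Q̃` then shows `(P + R)^k → 0` geometrically on positive matrices.

Existence: iterate `(x, y) ↦ (Q + P x - R y, Q + P y - R x)` from `(0, M)`. By (d) and positivity
of `P, R`, `x_k` increases, `y_k` decreases, and `y_k - x_k = (P + R)^k M → 0`, so both converge
to a fixed point `X ≥ x_1 = Q - R M > 0`.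
Uniqueness: the difference `Δ` of two solutions satisfies `Δ = P Δ - R Δ`, and inductively
`-(P + R)^k (‖Δ‖ I) ≤ Δ ≤ (P + R)^k (‖Δ‖ I)` for every `k`.
-/

open Matrix Filter
open scoped ComplexOrder

open scoped Topology

theorem ContinuousLinearMap.monotone_pow {S M : Type*} [Semiring S] [AddCommMonoid M] [Preorder M]
    [TopologicalSpace M] [Module S M] {K : M →L[S] M} (hK : Monotone K) (k : ℕ) :
    Monotone (K ^ k) := by
  rw [FunLike.coe_pow_eq_iterate]
  exact hK.iterate k

section NestedIteration

variable {A : Type*} [CStarAlgebra A] [PartialOrder A] [StarOrderedRing A]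

theorem norm_le_three_mul_norm_of_neg_le_of_le {x y : A} (h₁ : -y ≤ x) (h₂ : x ≤ y) :
    ‖x‖ ≤ 3 * ‖y‖ := by
  have h : ‖y - x‖ ≤ ‖y + y‖ :=
    CStarAlgebra.norm_le_norm_of_nonneg_of_le (sub_nonneg.2 h₂)
      ((sub_le_sub_left h₁ y).trans_eq (sub_neg_eq_add y y))
  calc ‖x‖ = ‖y - (y - x)‖ := by rw [sub_sub_cancel]
    _ ≤ ‖y‖ + ‖y + y‖ := (norm_sub_le _ _).trans (by gcongr)
    _ ≤ 3 * ‖y‖ := by linarith [norm_add_le y y]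

theorem exists_tendsto_of_monotone_of_antitone {x y : ℕ → A} (hx : Monotone x) (hy : Antitone y)
    (hxy : ∀ k, x k ≤ y k) (h : Tendsto (fun k => y k - x k) atTop (𝓝 0)) :
    ∃ a, Tendsto x atTop (𝓝 a) ∧ Tendsto y atTop (𝓝 a) := by
  have hgap : ∀ k j, k ≤ j → ‖x j - x k‖ ≤ ‖y k - x k‖ := fun k j hkj =>
    CStarAlgebra.norm_le_norm_of_nonneg_of_le (sub_nonneg.2 (hx hkj))
      (sub_le_sub_right ((hxy j).trans (hy hkj)) _)
  have hcauchy : CauchySeq x := by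
    refine cauchySeq_of_le_tendsto_0 (fun k => 2 * ‖y k - x k‖) (fun i j k hi hj => ?_) ?_
    · rw [dist_eq_norm]
      linarith [norm_sub_le_norm_sub_add_norm_sub (x i) (x k) (x j), norm_sub_rev (x k) (x j),
        hgap k i hi, hgap k j hj]
    · simpa using h.norm.const_mul 2
  obtain ⟨a, ha⟩ := cauchySeq_tendsto_of_complete hcauchy
  exact ⟨a, ha, by simpa using ha.add h⟩

noncomputable def nestedSeq (P R : A →L[ℂ] A) (q m : A) : ℕ → A × A
  | 0 => (0, m)
  | k + 1 => (q + P (nestedSeq P R q m k).1 - R (nestedSeq P R q m k).2,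
      q + P (nestedSeq P R q m k).2 - R (nestedSeq P R q m k).1)

variable {P R : A →L[ℂ] A}

theorem sub_apply_mem_Icc_add_apply (hP : Monotone P) (hR : Monotone R) {x y : A}
    (h : x ∈ Set.Icc (-y) y) : (P - R) x ∈ Set.Icc (-(P + R) y) ((P + R) y) := by
  simp only [_root_.sub_apply, _root_.add_apply, Set.mem_Icc]
  constructor
  · calc -(P y + R y) = P (-y) - R y := by rw [map_neg]; abel
      _ ≤ P x - R x := sub_le_sub (hP h.1) (hR h.2)
  · calc P x - R x ≤ P y - R (-y) := sub_le_sub (hP h.2) (hR h.1)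
      _ = P y + R y := by rw [map_neg, sub_neg_eq_add]

variable (hP : Monotone P) (hR : Monotone R)
  (hK : ∀ x, 0 ≤ x → Tendsto (fun k => ((P + R) ^ k) x) atTop (𝓝 0))
include hP hR hK

theorem eq_zero_of_sub_apply_eq {x : A} (hx : IsSelfAdjoint x) (hfix : (P - R) x = x) :
    x = 0 := by
  set y := algebraMap ℝ A ‖x‖
  have hbound : ∀ k, x ∈ Set.Icc (-((P + R) ^ k) y) (((P + R) ^ k) y) := by
    intro k
    induction k with
    | zero =>
      exact ⟨by simpa using hx.neg_algebraMap_norm_le_self,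
        by simpa using hx.le_algebraMap_norm_self⟩
    | succ k ih =>
      rw [pow_succ', mul_apply_eq_comp, ← hfix]
      exact sub_apply_mem_Icc_add_apply hP hR ih
  have hlim : Tendsto (fun k => 3 * ‖((P + R) ^ k) y‖) atTop (𝓝 0) := by
    simpa using ((hK y (algebraMap_nonneg A (norm_nonneg x))).norm.const_mul 3)
  exact norm_le_zero_iff.1 <| ge_of_tendsto' hlim fun k =>
    norm_le_three_mul_norm_of_neg_le_of_le (hbound k).1 (hbound k).2

theorem exists_sub_le_and_add_sub_apply_eq {q m : A} (hm : 0 ≤ m) (h₁ : R m ≤ q)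
    (h₂ : q + P m ≤ m) : ∃ x, q - R m ≤ x ∧ q + (P - R) x = x := by
  set x := fun k => (nestedSeq P R q m k).1
  set y := fun k => (nestedSeq P R q m k).2
  have hgap : ∀ k, y k - x k = ((P + R) ^ k) m := by
    intro k
    induction k with
    | zero => simp [x, y, nestedSeq]
    | succ k ih =>
      rw [pow_succ', mul_apply_eq_comp, ← ih]
      simp only [x, y, nestedSeq, map_sub, _root_.add_apply]
      abel
  have hstep : ∀ k, x k ≤ x (k + 1) ∧ y (k + 1) ≤ y k := by
    intro k
    induction k with
    | zero => simpa [x, y, nestedSeq] using ⟨h₁, h₂⟩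
    | succ k ih =>
      exact ⟨sub_le_sub (add_le_add le_rfl (hP ih.1)) (hR ih.2),
        sub_le_sub (add_le_add le_rfl (hP ih.2)) (hR ih.1)⟩
  have hx : Monotone x := monotone_nat_of_le_succ fun k => (hstep k).1
  have hPR : Monotone (P + R) := hP.add hR
  have hxy : ∀ k, x k ≤ y k := fun k => sub_nonneg.1 <| hgap k ▸
    map_zero ((P + R) ^ k) ▸ ContinuousLinearMap.monotone_pow hPR k hm
  obtain ⟨a, hxa, hya⟩ := exists_tendsto_of_monotone_of_antitone hx
    (antitone_nat_of_succ_le fun k => (hstep k).2) hxy (by simpa only [hgap] using hK m hm)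
  refine ⟨a, ?_, ?_⟩
  · have hx₁ : x 1 = q - R m := by simp [x, nestedSeq]
    exact hx₁ ▸ ge_of_tendsto hxa (eventually_atTop.2 ⟨1, fun k hk => hx hk⟩)
  · have hlim := ((tendsto_const_nhds (x := q)).add ((P.continuous.tendsto a).comp hxa)).sub
      ((R.continuous.tendsto a).comp hya)
    refine tendsto_nhds_unique ?_ (hxa.comp (tendsto_add_atTop_nat 1))
    simpa [Function.comp_def, x, y, nestedSeq, add_sub_assoc] using hlim

end NestedIteration

namespace Matrix

variable {n : Type*} [Fintype n] [DecidableEq n]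
open scoped MatrixOrder Matrix.Norms.L2Operator

theorem re_trace_mul_le_re_trace_mul {X Y Z : Matrix n n ℂ} (hX : 0 ≤ X) (hYZ : Y ≤ Z) :
    (X * Y).trace.re ≤ (X * Z).trace.re := by
  set S := CFC.sqrt (Z - Y)
  have hS : S * S = Z - Y := CFC.sqrt_mul_sqrt_self _ (sub_nonneg.2 hYZ)
  have hSXS : 0 ≤ S * X * S := by
    have h := star_left_conjugate_le_conjugate hX S
    rwa [(CFC.sqrt_nonneg (Z - Y)).isSelfAdjoint.star_eq, mul_zero, zero_mul] at h
  have key : (X * Z).trace - (X * Y).trace = (S * X * S).trace := by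
    rw [← trace_sub, ← Matrix.mul_sub, ← hS, ← mul_assoc, trace_mul_comm, ← mul_assoc]
  have := Complex.re_le_re (nonneg_iff_posSemidef.1 hSXS).trace_nonneg
  rw [← key, Complex.sub_re, Complex.zero_re] at this
  linarith

theorem re_trace_mul_algebraMap (X : Matrix n n ℂ) (r : ℝ) :
    (X * algebraMap ℝ _ r).trace.re = r * X.trace.re := by
  rw [Algebra.algebraMap_eq_smul_one, Matrix.mul_smul, mul_one, trace_smul, Complex.smul_re,
    smul_eq_mul]

theorem norm_le_re_trace {X : Matrix n n ℂ} (hX : 0 ≤ X) : ‖X‖ ≤ X.trace.re := by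
  rcases subsingleton_or_nontrivial (Matrix n n ℂ) with h | h
  · simp [Subsingleton.elim X 0]
  have hX' := nonneg_iff_posSemidef.1 hX
  obtain ⟨i, hi⟩ : ‖X‖ ∈ Set.range hX'.1.eigenvalues :=
    hX'.1.spectrum_real_eq_range_eigenvalues ▸ CStarAlgebra.norm_mem_spectrum_of_nonneg hX
  rw [hX'.1.trace_eq_sum_eigenvalues, ← hi, Complex.re_sum]
  simpa using Finset.single_le_sum (fun j _ => hX'.eigenvalues_nonneg j) (Finset.mem_univ i)

theorem PosDef.exists_pos_algebraMap_le {X : Matrix n n ℂ} (hX : X.PosDef) :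
    ∃ ε > 0, algebraMap ℝ _ ε ≤ X := by
  rcases subsingleton_or_nontrivial (Matrix n n ℂ) with h | h
  · exact ⟨1, one_pos, (Subsingleton.elim _ _).le⟩
  have hX' := isStrictlyPositive_iff_posDef.2 hX
  exact (CFC.exists_pos_algebraMap_le_iff hX'.isSelfAdjoint).2 fun _ h => hX'.spectrum_pos h

theorem PosDef.exists_norm_le_mul_re_trace_mul {Qt : Matrix n n ℂ} (hQt : Qt.PosDef) :
    ∃ C, 0 ≤ C ∧ ∀ X, 0 ≤ X → ‖X‖ ≤ C * (X * Qt).trace.re := by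
  obtain ⟨ε, hε, hεQt⟩ := hQt.exists_pos_algebraMap_le
  refine ⟨ε⁻¹, inv_nonneg.2 hε.le, fun X hX => (norm_le_re_trace hX).trans ?_⟩
  have h := re_trace_mul_le_re_trace_mul hX hεQt
  rw [re_trace_mul_algebraMap] at h
  rwa [le_inv_mul_iff₀ hε]

theorem PosDef.exists_re_trace_mul_le_mul {Qt S : Matrix n n ℂ} (hQt : Qt.PosDef)
    (hS : (Qt - S).PosDef) :
    ∃ c, 0 ≤ c ∧ c < 1 ∧ ∀ X, 0 ≤ X → (X * S).trace.re ≤ c * (X * Qt).trace.re := by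
  obtain ⟨δ, hδ, hδle⟩ := hS.exists_pos_algebraMap_le
  set β := ‖Qt‖ + δ
  have hβ : 0 < β := by positivity
  have hQtβ : Qt ≤ algebraMap ℝ _ β := hQt.isHermitian.isSelfAdjoint.le_algebraMap_norm_self.trans
    (algebraMap_mono _ (le_add_of_nonneg_right hδ.le))
  refine ⟨1 - δ / β, ?_, ?_, fun X hX => ?_⟩
  · rw [sub_nonneg, div_le_one hβ]
    exact le_add_of_nonneg_left (norm_nonneg _)
  · linarith [div_pos hδ hβ]
  · have h₁ := re_trace_mul_le_re_trace_mul hX hδle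
    have h₂ := re_trace_mul_le_re_trace_mul hX hQtβ
    rw [Matrix.mul_sub, trace_sub, Complex.sub_re, re_trace_mul_algebraMap] at h₁
    rw [re_trace_mul_algebraMap] at h₂
    have h₃ : δ / β * (X * Qt).trace.re ≤ δ * X.trace.re := by
      rw [div_mul_eq_mul_div, div_le_iff₀ hβ]
      nlinarith
    linarith

theorem tendsto_pow_apply_zero_of_re_trace_mul_le {K : Matrix n n ℂ →L[ℂ] Matrix n n ℂ}
    (hK : Monotone K) {Qt : Matrix n n ℂ} (hQt : Qt.PosDef) {c : ℝ} (hc₀ : 0 ≤ c) (hc₁ : c < 1)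
    (hcontr : ∀ X, 0 ≤ X → (K X * Qt).trace.re ≤ c * (X * Qt).trace.re) {X : Matrix n n ℂ}
    (hX : 0 ≤ X) : Tendsto (fun k => (K ^ k) X) atTop (𝓝 0) := by
  obtain ⟨C, hC₀, hC⟩ := hQt.exists_norm_le_mul_re_trace_mul
  have hpos : ∀ k, 0 ≤ (K ^ k) X := fun k =>
    map_zero (K ^ k) ▸ ContinuousLinearMap.monotone_pow hK k hX
  have hdecay : ∀ k, ((K ^ k) X * Qt).trace.re ≤ c ^ k * (X * Qt).trace.re := by
    intro k
    induction k with
    | zero => simp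
    | succ k ih =>
      rw [pow_succ', mul_apply_eq_comp, pow_succ', mul_assoc]
      exact (hcontr _ (hpos k)).trans (mul_le_mul_of_nonneg_left ih hc₀)
  refine squeeze_zero_norm (fun k => (hC _ (hpos k)).trans
    (mul_le_mul_of_nonneg_left (hdecay k) hC₀)) ?_
  simpa using ((tendsto_pow_atTop_nhds_zero_of_lt_one hc₀ hc₁).mul_const
    (X * Qt).trace.re).const_mul C

noncomputable def congrCLM (V : Matrix n n ℂ) : Matrix n n ℂ →L[ℂ] Matrix n n ℂ :=
  ContinuousLinearMap.mulLeftRight ℂ _ Vᴴ V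

theorem congrCLM_apply (V X : Matrix n n ℂ) : congrCLM V X = Vᴴ * X * V := rfl

theorem monotone_congrCLM (V : Matrix n n ℂ) : Monotone (congrCLM V) := fun _ _ h =>
  star_left_conjugate_le_conjugate h V

theorem trace_congrCLM_mul (V X Y : Matrix n n ℂ) :
    (congrCLM V X * Y).trace = (X * (V * Y * Vᴴ)).trace := by
  rw [congrCLM_apply, mul_assoc, mul_assoc, trace_mul_comm, mul_assoc, mul_assoc]

theorem existsUnique_posDef_add_congr_sub_congr {V W U B Q Qt M : Matrix n n ℂ}
    (hQt : Qt.PosDef) (hM : M.PosSemidef)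
    (hS : (Qt - (V * Qt * Vᴴ + W * Qt * Wᴴ + (U * Qt * Uᴴ + B * Qt * Bᴴ))).PosDef)
    (h₁ : (Q - (Uᴴ * M * U + Bᴴ * M * B)).PosDef)
    (h₂ : (M - (Vᴴ * M * V + Wᴴ * M * W) - Q).PosSemidef) :
    ∃! X, X.PosDef ∧ Q + (Vᴴ * X * V + Wᴴ * X * W) - (Uᴴ * X * U + Bᴴ * X * B) = X := by
  set P := congrCLM V + congrCLM W
  set R := congrCLM U + congrCLM B
  have hPX : ∀ X, P X = Vᴴ * X * V + Wᴴ * X * W := fun _ => rfl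
  have hRX : ∀ X, R X = Uᴴ * X * U + Bᴴ * X * B := fun _ => rfl
  have hP : Monotone P := (monotone_congrCLM V).add (monotone_congrCLM W)
  have hR : Monotone R := (monotone_congrCLM U).add (monotone_congrCLM B)
  have hfix : ∀ X, Q + (P - R) X = X ↔
      Q + (Vᴴ * X * V + Wᴴ * X * W) - (Uᴴ * X * U + Bᴴ * X * B) = X := fun X => by
    rw [_root_.sub_apply, hPX, hRX, ← add_sub_assoc]
  obtain ⟨c, hc₀, hc₁, hc⟩ := hQt.exists_re_trace_mul_le_mul hS
  have hK : ∀ X, 0 ≤ X → Tendsto (fun k => ((P + R) ^ k) X) atTop (𝓝 0) := fun X hX =>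
    tendsto_pow_apply_zero_of_re_trace_mul_le (hP.add hR) hQt hc₀ hc₁ (fun Y hY => by
      simpa only [P, R, _root_.add_apply, add_mul, mul_add, trace_add, trace_congrCLM_mul,
        Complex.add_re] using hc Y hY) hX
  have hMQ : Q + P M ≤ M := le_iff.2 <| by
    rwa [hPX, sub_add_eq_sub_sub_swap]
  obtain ⟨X, hle, hX⟩ := exists_sub_le_and_add_sub_apply_eq hP hR hK
    (nonneg_iff_posSemidef.2 hM) (le_iff.2 h₁.posSemidef) hMQ
  have hXpd : X.PosDef := by
    have h := h₁.add_posSemidef (le_iff.1 hle)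
    rwa [hRX, add_sub_cancel] at h
  refine ⟨X, ⟨hXpd, (hfix X).1 hX⟩, fun Y ⟨hYpd, hY⟩ => ?_⟩
  have hPRY := eq_sub_of_add_eq' ((hfix Y).2 hY)
  have hPRX := eq_sub_of_add_eq' hX
  refine sub_eq_zero.1 (eq_zero_of_sub_apply_eq hP hR hK (hYpd.1.sub hXpd.1).isSelfAdjoint ?_)
  rw [map_sub, hPRY, hPRX, sub_sub_sub_cancel_right]

end Matrix

theorem conjTranspose_mul_mul_splitting {n : Type*} [Fintype n] [DecidableEq n]
    {A B U V W : Matrix n n ℂ}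
    (hU : U = ((Real.sqrt 2 : ℂ))⁻¹ • (A - B + 1))
    (hV : V = ((Real.sqrt 2 : ℂ))⁻¹ • (A + B + 1))
    (hW : W = B - 1) (X : Matrix n n ℂ) :
    Vᴴ * X * V + Wᴴ * X * W - (Uᴴ * X * U + Bᴴ * X * B) = Aᴴ * X * B + Bᴴ * X * A + X := by
  have hstar : star ((Real.sqrt 2 : ℂ))⁻¹ = ((Real.sqrt 2 : ℂ))⁻¹ := by
    rw [star_inv₀, Complex.star_def, Complex.conj_ofReal]
  have hhalf : ((Real.sqrt 2 : ℂ))⁻¹ * ((Real.sqrt 2 : ℂ))⁻¹ = (2 : ℂ)⁻¹ := by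
    rw [← mul_inv, ← Complex.ofReal_mul, Real.mul_self_sqrt zero_le_two, Complex.ofReal_ofNat]
  subst hU hV hW
  simp only [conjTranspose_smul, Matrix.smul_mul, Matrix.mul_smul, smul_smul, hstar, hhalf,
    conjTranspose_add, conjTranspose_sub, conjTranspose_one, add_mul, mul_add, sub_mul, mul_sub,
    one_mul, mul_one, mul_assoc, smul_add, smul_sub]
  module

theorem stmt7_general {N : ℕ} (A B Q Qt M : Matrix (Fin N) (Fin N) ℂ)
    (hQt : Qt.PosDef) (hM : M.PosDef)
    (U V W : Matrix (Fin N) (Fin N) ℂ)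
    (hU : U = ((Real.sqrt 2 : ℂ))⁻¹ • (A - B + 1))
    (hV : V = ((Real.sqrt 2 : ℂ))⁻¹ • (A + B + 1))
    (hW : W = B - 1)
    (ha : (Qt - 2 • (U * Qt * Uᴴ + B * Qt * Bᴴ)).PosDef)
    (hb : (Qt - 2 • (V * Qt * Vᴴ + W * Qt * Wᴴ)).PosDef)
    (hd1 : (Q - (Uᴴ * M * U + Bᴴ * M * B)).PosDef)
    (hd2 : ((M - (Vᴴ * M * V + Wᴴ * M * W)) - Q).PosDef) :
    ∃! X : Matrix (Fin N) (Fin N) ℂ, X.PosDef ∧ Aᴴ * X * B + Bᴴ * X * A = -Q := by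
  have hS : (Qt - (V * Qt * Vᴴ + W * Qt * Wᴴ + (U * Qt * Uᴴ + B * Qt * Bᴴ))).PosDef := by
    convert (ha.add hb).smul (a := (2⁻¹ : ℝ)) (by norm_num) using 1
    module
  have hfix : ∀ X, Q + (Vᴴ * X * V + Wᴴ * X * W) - (Uᴴ * X * U + Bᴴ * X * B) = X ↔
      Aᴴ * X * B + Bᴴ * X * A = -Q := fun X => by
    rw [add_sub_assoc, conjTranspose_mul_mul_splitting hU hV hW, ← add_assoc, add_eq_right,
      add_comm, ← eq_neg_iff_add_eq_zero]
  obtain ⟨X, ⟨hXpd, hX⟩, huniq⟩ :=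
    Matrix.existsUnique_posDef_add_congr_sub_congr hQt hM.posSemidef hS hd1 hd2.posSemidef
  exact ⟨X, ⟨hXpd, (hfix X).1 hX⟩, fun Y hY => huniq Y ⟨hY.1, (hfix Y).2 hY.2⟩⟩

theorem stmt7 {N : ℕ} (A B Q Qt M : Matrix (Fin N) (Fin N) ℂ)
    (hQ : Q.PosDef) (hQt : Qt.PosDef) (hM : M.PosDef)
    (U V W : Matrix (Fin N) (Fin N) ℂ)
    (hU : U = ((Real.sqrt 2 : ℂ))⁻¹ • (A - B + 1))
    (hV : V = ((Real.sqrt 2 : ℂ))⁻¹ • (A + B + 1))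
    (hW : W = B - 1)
    (ha : (Qt - 2 • (U * Qt * Uᴴ + B * Qt * Bᴴ)).PosDef)
    (hb : (Qt - 2 • (V * Qt * Vᴴ + W * Qt * Wᴴ)).PosDef)
    (hc : ((M - (Vᴴ * M * V + Wᴴ * M * W)) - (Uᴴ * M * U + Bᴴ * M * B)).PosDef)
    (hd1 : (Q - (Uᴴ * M * U + Bᴴ * M * B)).PosDef)
    (hd2 : ((M - (Vᴴ * M * V + Wᴴ * M * W)) - Q).PosDef) :
    ∃! X : Matrix (Fin N) (Fin N) ℂ, X.PosDef ∧ Aᴴ * X * B + Bᴴ * X * A = -Q :=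
  stmt7_general A B Q Qt M hQt hM U V W hU hV hW ha hb hd1 hd2
end

section
/- Under the hypotheses (a)–(d) of the main theorem (existence of Hermitian positive definite Q̃ and M with 2(U Q̃ U* + B Q̃ B*) < Q̃, 2(V Q̃ V* + W Q̃ W*) < Q̃, U*MU + B*MB < M − (V*MV + W*MW), and U*MU + B*MB < Q < M − (V*MV + W*MW)), the unique Hermitian positive definite solution X̂ of A*XB + B*XA = −Q satisfies Q − (U*MU + B*MB) ≤ X̂ ≤ Q + (V*MV + W*MW). -/
open Matrix Filter
open scoped ComplexOrder

/-!
With `Φ X = V* X V + W* X W` and `Ψ X = U* X U + B* X B`, a polarization identity turns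
`A* X B + B* X A = -Q` into the fixed-point equation `X = Q + Φ X - Ψ X`. The maps `Φ`, `Ψ` are
positive and, by (c), `Φ M + Ψ M ≤ c M` for some `c < 1`. Hence if `X ↦ Q + Φ X - Ψ X` maps an
order interval `[a, b]` into itself, it maps `[a - s M, b + s M]` into `[a - c s M, b + c s M]`;
since the positive cone is closed, every Hermitian fixed point lies in `[a, b]`. For `[0, M]`
(invariant by (d)) this gives the bounds; for `Q = 0` and `[0, 0]` it shows that the homogeneous
equation has no nonzero Hermitian solution, so the equation is uniquely solvable on the
finite-dimensional real space of Hermitian matrices.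
-/

open scoped MatrixOrder Matrix.Norms.L2Operator
open Set

section OrderedModule

variable {E : Type*} [AddCommGroup E] [PartialOrder E] [IsOrderedAddMonoid E] [Module ℝ E]
  (Φ Ψ : E →ₚ[ℝ] E) {m q a b x : E} {c s : ℝ}

lemma mem_Icc_sub_add_of_mem_Icc (hx : x ∈ Icc 0 m) (hfix : q + Φ x - Ψ x = x) :
    x ∈ Icc (q - Ψ m) (q + Φ m) := by
  rw [← hfix]
  exact ⟨sub_le_sub (le_add_of_nonneg_right (Φ.map_nonneg hx.1)) (OrderHomClass.mono Ψ hx.2),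
    (sub_le_self _ (Ψ.map_nonneg hx.1)).trans (add_le_add_right (OrderHomClass.mono Φ hx.2) q)⟩

variable [PosSMulMono ℝ E]

lemma exists_le_smul_of_le_smul_sub {p : E} {t : ℝ} (hp : p ≤ m) (ht : m ≤ t • (m - p)) :
    ∃ c : ℝ, 0 ≤ c ∧ c < 1 ∧ p ≤ c • m := by
  set t' := max t 1
  have ht'1 : 1 ≤ t' := le_max_right _ _
  have ht'0 : 0 < t' := zero_lt_one.trans_le ht'1
  have ht' : m ≤ t' • (m - p) :=
    ht.trans (smul_le_smul_of_nonneg_right (le_max_left _ _) (sub_nonneg.2 hp))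
  refine ⟨1 - t'⁻¹, sub_nonneg.2 (inv_le_one_of_one_le₀ ht'1), sub_lt_self _ (inv_pos.2 ht'0), ?_⟩
  calc p = m - t'⁻¹ • (t' • (m - p)) := by
        rw [smul_smul, inv_mul_cancel₀ ht'0.ne', one_smul, sub_sub_cancel]
    _ ≤ m - t'⁻¹ • m := sub_le_sub_left (smul_le_smul_of_nonneg_left ht' (inv_nonneg.2 ht'0.le)) _
    _ = (1 - t'⁻¹) • m := by rw [sub_smul, one_smul]

lemma add_map_sub_map_mem_Icc (hs : 0 ≤ s) (hc : Φ m + Ψ m ≤ c • m)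
    (ha : a ≤ q + Φ a - Ψ b) (hb : q + Φ b - Ψ a ≤ b) (hx : x ∈ Icc (a - s • m) (b + s • m)) :
    q + Φ x - Ψ x ∈ Icc (a - (c * s) • m) (b + (c * s) • m) := by
  have hcs : s • (Φ m + Ψ m) ≤ (c * s) • m := by
    rw [mul_comm, mul_smul]
    exact smul_le_smul_of_nonneg_left hc hs
  constructor
  · calc a - (c * s) • m ≤ (q + Φ a - Ψ b) - s • (Φ m + Ψ m) := sub_le_sub ha hcs
      _ = q + Φ (a - s • m) - Ψ (b + s • m) := by
        simp only [map_sub, map_add, map_smul]; module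
      _ ≤ q + Φ x - Ψ x :=
        sub_le_sub (add_le_add_right (OrderHomClass.mono Φ hx.1) q) (OrderHomClass.mono Ψ hx.2)
  · calc q + Φ x - Ψ x ≤ q + Φ (b + s • m) - Ψ (a - s • m) :=
          sub_le_sub (add_le_add_right (OrderHomClass.mono Φ hx.2) q) (OrderHomClass.mono Ψ hx.1)
      _ = (q + Φ b - Ψ a) + s • (Φ m + Ψ m) := by
        simp only [map_sub, map_add, map_smul]; module
      _ ≤ b + (c * s) • m := add_le_add hb hcs

theorem mem_Icc_of_add_map_sub_map_eq [TopologicalSpace E] [OrderClosedTopology E]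
    [IsTopologicalAddGroup E] [ContinuousSMul ℝ E] (hc0 : 0 ≤ c) (hc1 : c < 1)
    (hc : Φ m + Ψ m ≤ c • m) (ha : a ≤ q + Φ a - Ψ b) (hb : q + Φ b - Ψ a ≤ b) (hs : 0 ≤ s)
    (hx : x ∈ Icc (a - s • m) (b + s • m)) (hfix : q + Φ x - Ψ x = x) : x ∈ Icc a b := by
  have hiter : ∀ n : ℕ, x ∈ Icc (a - (c ^ n * s) • m) (b + (c ^ n * s) • m) := by
    intro n
    induction n with
    | zero => simpa using hx
    | succ n ih =>
      have := add_map_sub_map_mem_Icc Φ Ψ (by positivity) hc ha hb ih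
      rwa [hfix, ← mul_assoc, ← pow_succ'] at this
  have hlim : Tendsto (fun n : ℕ => (c ^ n * s) • m) atTop (nhds 0) := by
    simpa using ((tendsto_pow_atTop_nhds_zero_of_lt_one hc0 hc1).mul_const s).smul_const m
  exact ⟨le_of_tendsto' (by simpa using tendsto_const_nhds.sub hlim) fun n => (hiter n).1,
    ge_of_tendsto' (by simpa using tendsto_const_nhds.add hlim) fun n => (hiter n).2⟩

end OrderedModule

lemma LinearMap.surjOn_of_injOn {K V : Type*} [Field K] [AddCommGroup V] [Module K V]
    [FiniteDimensional K V] (f : V →ₗ[K] V) (p : Submodule K V) (hmaps : MapsTo f p p)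
    (hinj : InjOn f p) : SurjOn f p p := by
  let g := f.restrict fun x hx => hmaps hx
  have hg : Function.Injective g := fun x y h => Subtype.ext (hinj x.2 y.2 (congrArg Subtype.val h))
  intro y hy
  obtain ⟨x, hx⟩ := LinearMap.injective_iff_surjective.mp hg ⟨y, hy⟩
  exact ⟨x, x.2, congrArg Subtype.val hx⟩

section CStarAlgebra

variable {A : Type*} [CStarAlgebra A] [PartialOrder A] [StarOrderedRing A]

lemma IsStrictlyPositive.exists_le_smul {d r : A} (hd : IsStrictlyPositive d)
    (hr : IsSelfAdjoint r) : ∃ t : ℝ, 0 ≤ t ∧ r ≤ t • d := by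
  rcases subsingleton_or_nontrivial A with hA | hA
  · exact ⟨0, le_rfl, (Subsingleton.elim _ _).le⟩
  obtain ⟨ε, hε, hεd⟩ :=
    (CFC.exists_pos_algebraMap_le_iff hd.isSelfAdjoint).2 fun x hx => hd.spectrum_pos hx
  refine ⟨‖r‖ / ε, by positivity, ?_⟩
  calc r ≤ algebraMap ℝ A ‖r‖ := hr.le_algebraMap_norm_self
    _ = (‖r‖ / ε) • algebraMap ℝ A ε := by
      rw [Algebra.algebraMap_eq_smul_one, Algebra.algebraMap_eq_smul_one, smul_smul,
        div_mul_cancel₀ _ hε.ne']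
    _ ≤ (‖r‖ / ε) • d := smul_le_smul_of_nonneg_left hεd (by positivity)

lemma IsStrictlyPositive.exists_lt_one_le_smul {m p : A} (hm : IsSelfAdjoint m)
    (h : IsStrictlyPositive (m - p)) : ∃ c : ℝ, 0 ≤ c ∧ c < 1 ∧ p ≤ c • m := by
  obtain ⟨t, -, ht⟩ := h.exists_le_smul hm
  exact exists_le_smul_of_le_smul_sub (sub_nonneg.mp h.nonneg) ht

lemma IsStrictlyPositive.exists_mem_Icc_sub_add_smul {m a b x : A} (hm : IsStrictlyPositive m)
    (ha : IsSelfAdjoint (a - x)) (hb : IsSelfAdjoint (x - b)) :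
    ∃ s : ℝ, 0 ≤ s ∧ x ∈ Icc (a - s • m) (b + s • m) := by
  obtain ⟨s₁, hs₁, h₁⟩ := hm.exists_le_smul ha
  obtain ⟨s₂, hs₂, h₂⟩ := hm.exists_le_smul hb
  have hmono : Monotone fun s : ℝ => s • m := fun _ _ h => smul_le_smul_of_nonneg_right h hm.nonneg
  exact ⟨max s₁ s₂, le_max_of_le_left hs₁,
    sub_le_comm.mp (h₁.trans (hmono (le_max_left _ _))),
    sub_le_iff_le_add'.mp (h₂.trans (hmono (le_max_right _ _)))⟩

lemma PositiveLinearMap.map_isSelfAdjoint {B : Type*} [NonUnitalRing B] [StarRing B]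
    [PartialOrder B] [StarOrderedRing B] [Module ℝ B] (f : A →ₚ[ℝ] B) {x : A}
    (hx : IsSelfAdjoint x) : IsSelfAdjoint (f x) := by
  rw [← CFC.posPart_sub_negPart x hx, map_sub]
  exact (IsSelfAdjoint.of_nonneg (f.map_nonneg (CFC.posPart_nonneg x))).sub
    (.of_nonneg (f.map_nonneg (CFC.negPart_nonneg x)))

noncomputable def PositiveLinearMap.starLeftConjugate (u : A) : A →ₚ[ℝ] A :=
  .mk₀ ((LinearMap.mulRight ℝ u).comp (LinearMap.mulLeft ℝ (star u)))
    fun _ hx => star_left_conjugate_nonneg hx u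

variable (Φ Ψ : A →ₚ[ℝ] A) {m q : A} {c : ℝ}

theorem mem_Icc_of_isSelfAdjoint_of_add_map_sub_map_eq (hm : IsStrictlyPositive m)
    (hc0 : 0 ≤ c) (hc1 : c < 1) (hc : Φ m + Ψ m ≤ c • m) {a b x : A}
    (ha : a ≤ q + Φ a - Ψ b) (hb : q + Φ b - Ψ a ≤ b) (hxa : IsSelfAdjoint (a - x))
    (hxb : IsSelfAdjoint (x - b)) (hfix : q + Φ x - Ψ x = x) : x ∈ Icc a b := by
  obtain ⟨s, hs, hx⟩ := hm.exists_mem_Icc_sub_add_smul hxa hxb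
  exact mem_Icc_of_add_map_sub_map_eq Φ Ψ hc0 hc1 hc ha hb hs hx hfix

theorem eq_of_isSelfAdjoint_of_add_map_sub_map_eq (hm : IsStrictlyPositive m)
    (hc0 : 0 ≤ c) (hc1 : c < 1) (hc : Φ m + Ψ m ≤ c • m) {x y : A}
    (hx : IsSelfAdjoint x) (hy : IsSelfAdjoint y) (hfx : q + Φ x - Ψ x = x)
    (hfy : q + Φ y - Ψ y = y) : x = y := by
  have hfix : 0 + Φ (x - y) - Ψ (x - y) = x - y := by
    conv_rhs => rw [← hfx, ← hfy]
    rw [map_sub, map_sub]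
    abel
  have hz := mem_Icc_of_isSelfAdjoint_of_add_map_sub_map_eq Φ Ψ hm hc0 hc1 hc (a := 0) (b := 0)
    (by simp) (by simp) (by simpa using (hx.sub hy).neg) (by simpa using hx.sub hy) hfix
  exact sub_eq_zero.mp (le_antisymm hz.2 hz.1)

theorem exists_isSelfAdjoint_add_map_sub_map_eq [FiniteDimensional ℝ A]
    (hm : IsStrictlyPositive m) (hc0 : 0 ≤ c) (hc1 : c < 1) (hc : Φ m + Ψ m ≤ c • m)
    (hq : IsSelfAdjoint q) : ∃ x, IsSelfAdjoint x ∧ q + Φ x - Ψ x = x := by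
  let f : A →ₗ[ℝ] A := LinearMap.id - Φ.toLinearMap + Ψ.toLinearMap
  have hf : ∀ x, f x + Φ x - Ψ x = x := fun x => by
    simp only [f, LinearMap.add_apply, LinearMap.sub_apply, LinearMap.id_coe, id_eq,
      PositiveLinearMap.coe_toLinearMap]
    abel
  have hsurj : SurjOn f (selfAdjoint.submodule ℝ A) (selfAdjoint.submodule ℝ A) := by
    refine f.surjOn_of_injOn _ (fun x hx => ?_) (fun x hx y hy hxy => ?_)
    · exact ((hx.sub (Φ.map_isSelfAdjoint hx)).add (Ψ.map_isSelfAdjoint hx) :)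
    · exact eq_of_isSelfAdjoint_of_add_map_sub_map_eq Φ Ψ hm hc0 hc1 hc hx hy (hf x)
        (hxy ▸ hf y)
  obtain ⟨x, hx, rfl⟩ := hsurj hq
  exact ⟨x, hx, hf x⟩

end CStarAlgebra

lemma conjTranspose_mul_mul_polarization {N : ℕ} (A B X U V W : Matrix (Fin N) (Fin N) ℂ)
    (hU : U = ((Real.sqrt 2 : ℂ))⁻¹ • (A - B + 1))
    (hV : V = ((Real.sqrt 2 : ℂ))⁻¹ • (A + B + 1))
    (hW : W = B - 1) :
    Vᴴ * X * V + Wᴴ * X * W - (Uᴴ * X * U + Bᴴ * X * B) = Aᴴ * X * B + Bᴴ * X * A + X := by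
  have hs : ((Real.sqrt 2 : ℂ))⁻¹ * ((Real.sqrt 2 : ℂ))⁻¹ = 2⁻¹ := by
    rw [← mul_inv, ← Complex.ofReal_mul, Real.mul_self_sqrt zero_le_two, Complex.ofReal_ofNat]
  subst hU hV hW
  simp only [conjTranspose_smul, Complex.star_def, map_inv₀, Complex.conj_ofReal,
    Matrix.smul_mul, Matrix.mul_smul, smul_smul, hs]
  simp only [conjTranspose_add, conjTranspose_sub, conjTranspose_one, Matrix.add_mul,
    Matrix.sub_mul, Matrix.mul_add, Matrix.mul_sub, Matrix.mul_one, Matrix.one_mul]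
  module

theorem stmt8_general {N : ℕ} (A B Q M : Matrix (Fin N) (Fin N) ℂ)
    (hQ : Q.PosDef) (hM : M.PosDef)
    (U V W : Matrix (Fin N) (Fin N) ℂ)
    (hU : U = ((Real.sqrt 2 : ℂ))⁻¹ • (A - B + 1))
    (hV : V = ((Real.sqrt 2 : ℂ))⁻¹ • (A + B + 1))
    (hW : W = B - 1)
    (hc : ((M - (Vᴴ * M * V + Wᴴ * M * W)) - (Uᴴ * M * U + Bᴴ * M * B)).PosDef)
    (hd1 : (Q - (Uᴴ * M * U + Bᴴ * M * B)).PosDef)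
    (hd2 : ((M - (Vᴴ * M * V + Wᴴ * M * W)) - Q).PosDef) :
    (∃! X : Matrix (Fin N) (Fin N) ℂ, X.PosDef ∧ Aᴴ * X * B + Bᴴ * X * A = -Q) ∧
    ∀ X : Matrix (Fin N) (Fin N) ℂ, X.PosDef → Aᴴ * X * B + Bᴴ * X * A = -Q →
      (X - (Q - (Uᴴ * M * U + Bᴴ * M * B))).PosSemidef ∧
      ((Q + (Vᴴ * M * V + Wᴴ * M * W)) - X).PosSemidef := by
  let Φ := PositiveLinearMap.starLeftConjugate V + PositiveLinearMap.starLeftConjugate W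
  let Ψ := PositiveLinearMap.starLeftConjugate U + PositiveLinearMap.starLeftConjugate B
  have hΦ (X : Matrix (Fin N) (Fin N) ℂ) : Φ X = Vᴴ * X * V + Wᴴ * X * W := rfl
  have hΨ (X : Matrix (Fin N) (Fin N) ℂ) : Ψ X = Uᴴ * X * U + Bᴴ * X * B := rfl
  have hsol (X : Matrix (Fin N) (Fin N) ℂ) :
      Aᴴ * X * B + Bᴴ * X * A = -Q ↔ Q + Φ X - Ψ X = X := by
    rw [add_sub_assoc, hΦ, hΨ, conjTranspose_mul_mul_polarization A B X U V W hU hV hW,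
      ← add_assoc, add_eq_right, add_eq_zero_iff_eq_neg']
  have hM' := hM.isStrictlyPositive
  rw [sub_sub] at hc
  obtain ⟨c, hc0, hc1, hcM⟩ := hc.isStrictlyPositive.exists_lt_one_le_smul hM.isHermitian
  have hbounds (X : Matrix (Fin N) (Fin N) ℂ) (hX : X.IsHermitian)
      (hXeq : Aᴴ * X * B + Bᴴ * X * A = -Q) : X ∈ Icc (Q - Ψ M) (Q + Φ M) := by
    refine mem_Icc_sub_add_of_mem_Icc Φ Ψ ?_ ((hsol X).mp hXeq)
    refine mem_Icc_of_isSelfAdjoint_of_add_map_sub_map_eq Φ Ψ hM' hc0 hc1 hcM ?_ ?_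
      (by rw [zero_sub]; exact hX.neg) (hX.sub hM.isHermitian) ((hsol X).mp hXeq)
    · rw [map_zero, add_zero]
      exact hd1.posSemidef.nonneg
    · rw [map_zero, sub_zero, Matrix.le_iff, add_comm, ← sub_sub]
      exact hd2.posSemidef
  obtain ⟨X₀, hX₀h, hX₀⟩ :=
    exists_isSelfAdjoint_add_map_sub_map_eq Φ Ψ hM' hc0 hc1 hcM hQ.isHermitian
  have hX₀eq := (hsol X₀).mpr hX₀
  have hX₀pos : X₀.PosDef := by
    have := hd1.add_posSemidef (Matrix.le_iff.mp (hbounds X₀ hX₀h hX₀eq).1)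
    rwa [← hΨ, add_sub_cancel] at this
  refine ⟨⟨X₀, ⟨hX₀pos, hX₀eq⟩, fun Y ⟨hY, hYeq⟩ => ?_⟩,
    fun X hX hXeq => hbounds X hX.isHermitian hXeq⟩
  exact eq_of_isSelfAdjoint_of_add_map_sub_map_eq Φ Ψ hM' hc0 hc1 hcM hY.isHermitian hX₀h
    ((hsol Y).mp hYeq) hX₀

theorem stmt8 {N : ℕ} (A B Q Qt M : Matrix (Fin N) (Fin N) ℂ)
    (hQ : Q.PosDef) (hQt : Qt.PosDef) (hM : M.PosDef)
    (U V W : Matrix (Fin N) (Fin N) ℂ)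
    (hU : U = ((Real.sqrt 2 : ℂ))⁻¹ • (A - B + 1))
    (hV : V = ((Real.sqrt 2 : ℂ))⁻¹ • (A + B + 1))
    (hW : W = B - 1)
    (ha : (Qt - 2 • (U * Qt * Uᴴ + B * Qt * Bᴴ)).PosDef)
    (hb : (Qt - 2 • (V * Qt * Vᴴ + W * Qt * Wᴴ)).PosDef)
    (hc : ((M - (Vᴴ * M * V + Wᴴ * M * W)) - (Uᴴ * M * U + Bᴴ * M * B)).PosDef)
    (hd1 : (Q - (Uᴴ * M * U + Bᴴ * M * B)).PosDef)
    (hd2 : ((M - (Vᴴ * M * V + Wᴴ * M * W)) - Q).PosDef) :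
    (∃! X : Matrix (Fin N) (Fin N) ℂ, X.PosDef ∧ Aᴴ * X * B + Bᴴ * X * A = -Q) ∧
    ∀ X : Matrix (Fin N) (Fin N) ℂ, X.PosDef → Aᴴ * X * B + Bᴴ * X * A = -Q →
      (X - (Q - (Uᴴ * M * U + Bᴴ * M * B))).PosSemidef ∧
      ((Q + (Vᴴ * M * V + Wᴴ * M * W)) - X).PosSemidef :=
  stmt8_general A B Q M hQ hM U V W hU hV hW hc hd1 hd2
end

section
/- Let A, B be N×N Hermitian matrices and Q Hermitian positive definite. If 2(UQU + BQB) < Q and 2(VQV + WQW) < Q, where U = (A − B + I)/√2, V = (A + B + I)/√2, W = B − I, then the equation AXB + BXA = −Q has exactly one Hermitian positive definite solution X̂, and X̂ satisfies Q − 2(UQU + BQB) ≤ X̂ ≤ Q + 2(VQV + WQW). -/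
/-!
Write `Φ X = 2 (U X U + B X B)` and `Ψ X = 2 (V X V + W X W)`; both are positive maps, and
`Ψ X - Φ X = 2 (A X B + B X A + X)`, so the equation says `Ψ X - Φ X = 2 (X - Q)`. The hypotheses
give `Φ Q ≤ α Q` and `Ψ Q ≤ β Q` with `α, β < 1`. By positivity, if a Hermitian solution lies in
`[Q - Φ Q - t Q, Q + Ψ Q + t Q]`, it also lies in that interval with `t` replaced by
`max (α, β, 0) t`; as `Q` is an order unit some `t` works to begin with, and iterating gives
`Q - Φ Q ≤ X ≤ Q + Ψ Q`. Run with `0` in place of the source term `Q` (keeping `Q` as order unit),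
the argument shows that the homogeneous equation has no nonzero Hermitian solution, so
`X ↦ A X B + B X A` is bijective on the real space of Hermitian matrices. The solution dominates
`Q - Φ Q > 0`, hence is positive definite.
-/

open Matrix Filter
open scoped ComplexOrder

open Set
open scoped MatrixOrder

namespace PositiveLinearMap

variable {E : Type*} [AddCommGroup E] [PartialOrder E] [IsOrderedAddMonoid E] [Module ℝ E]
  [PosSMulMono ℝ E] {P R S X : E} {c t : ℝ}

lemma map_le_of_le_add_add_smul (F : E →ₚ[ℝ] E) (hFP : F P ≤ c • P) (hSR : S ≤ R) (ht : 0 ≤ t)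
    (hX : X ≤ R + S + t • P) : F X ≤ (2:ℝ) • F R + (c * t) • P :=
  calc F X ≤ F (R + S + t • P) := OrderHomClass.mono F hX
    _ = F R + F S + t • F P := by rw [map_add, map_add, map_smul]
    _ ≤ F R + F R + t • (c • P) := by gcongr
    _ = (2:ℝ) • F R + (c * t) • P := by rw [two_smul, smul_smul, mul_comm]

lemma neg_smul_le_map_of_sub_sub_smul_le (F : E →ₚ[ℝ] E) (hFP : F P ≤ c • P) (hSR : S ≤ R)
    (ht : 0 ≤ t) (hX : R - S - t • P ≤ X) : -((c * t) • P) ≤ F X :=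
  calc -((c * t) • P) = F R - F R - t • (c • P) := by rw [sub_self, zero_sub, smul_smul, mul_comm]
    _ ≤ F R - F S - t • F P := by gcongr
    _ = F (R - S - t • P) := by rw [map_sub, map_sub, map_smul]
    _ ≤ F X := OrderHomClass.mono F hX

variable (Φ Ψ : E →ₚ[ℝ] E)

lemma mem_Icc_mul_smul_of_mem_Icc_smul (hΦP : Φ P ≤ c • P) (hΨP : Ψ P ≤ c • P)
    (hΦR : Φ R ≤ R) (hΨR : Ψ R ≤ R) (hX : Ψ X - Φ X = 2 • (X - R)) (ht : 0 ≤ t)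
    (hXt : X ∈ Icc (R - Φ R - t • P) (R + Ψ R + t • P)) :
    X ∈ Icc (R - Φ R - (c * t) • P) (R + Ψ R + (c * t) • P) := by
  rw [← Nat.cast_smul_eq_nsmul ℝ, Nat.cast_ofNat] at hX
  constructor
  · have hΨ := Ψ.neg_smul_le_map_of_sub_sub_smul_le hΨP hΦR ht hXt.1
    have hΦ := Φ.map_le_of_le_add_add_smul hΦP hΨR ht hXt.2
    refine le_of_smul_le_smul_left (a := (2:ℝ)) ?_ two_pos
    calc (2:ℝ) • (R - Φ R - (c * t) • P)
          = -((c * t) • P) - ((2:ℝ) • Φ R + (c * t) • P) + (2:ℝ) • R := by module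
      _ ≤ Ψ X - Φ X + (2:ℝ) • R := by gcongr
      _ = (2:ℝ) • X := by rw [hX]; module
  · have hΨ := Ψ.map_le_of_le_add_add_smul hΨP hΨR ht hXt.2
    have hΦ := Φ.neg_smul_le_map_of_sub_sub_smul_le hΦP hΦR ht hXt.1
    refine le_of_smul_le_smul_left (a := (2:ℝ)) ?_ two_pos
    calc (2:ℝ) • X = Ψ X + -Φ X + (2:ℝ) • R := by rw [← sub_eq_add_neg, hX]; module
      _ ≤ ((2:ℝ) • Ψ R + (c * t) • P) + (c * t) • P + (2:ℝ) • R := by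
        gcongr; exact neg_le.1 hΦ
      _ = (2:ℝ) • (R + Ψ R + (c * t) • P) := by module

theorem mem_Icc_smul_of_sub_eq_two_nsmul {α β : ℝ} (hP : 0 ≤ P) (hα : α < 1) (hβ : β < 1)
    (hΦP : Φ P ≤ α • P) (hΨP : Ψ P ≤ β • P) (hΦR : Φ R ≤ R) (hΨR : Ψ R ≤ R)
    (hX : Ψ X - Φ X = 2 • (X - R)) (h₀ : ∃ t : ℝ, X ∈ Icc (R - Φ R - t • P) (R + Ψ R + t • P))
    {s : ℝ} (hs : 0 < s) : X ∈ Icc (R - Φ R - s • P) (R + Ψ R + s • P) := by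
  set c : ℝ := max (max α β) 0
  have hc : c < 1 := max_lt (max_lt hα hβ) one_pos
  have hΦc : Φ P ≤ c • P :=
    hΦP.trans (smul_le_smul_of_nonneg_right ((le_max_left α β).trans (le_max_left _ 0)) hP)
  have hΨc : Ψ P ≤ c • P :=
    hΨP.trans (smul_le_smul_of_nonneg_right ((le_max_right α β).trans (le_max_left _ 0)) hP)
  have band_mono {t t' : ℝ} (htt' : t ≤ t') :
      Icc (R - Φ R - t • P) (R + Ψ R + t • P) ⊆ Icc (R - Φ R - t' • P) (R + Ψ R + t' • P) :=
    Icc_subset_Icc (by gcongr) (by gcongr)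
  obtain ⟨t, ht⟩ := h₀
  set t₀ := max t 0
  have hpow (k : ℕ) : X ∈ Icc (R - Φ R - (c ^ k * t₀) • P) (R + Ψ R + (c ^ k * t₀) • P) := by
    induction k with
    | zero => simpa using band_mono (le_max_left t 0) ht
    | succ k ih =>
      rw [pow_succ', mul_assoc]
      exact mem_Icc_mul_smul_of_mem_Icc_smul Φ Ψ hΦc hΨc hΦR hΨR hX (by positivity) ih
  have hlim : Tendsto (fun k : ℕ => c ^ k * t₀) atTop (nhds 0) := by
    simpa using (tendsto_pow_atTop_nhds_zero_of_lt_one (le_max_right _ _) hc).mul_const t₀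
  obtain ⟨k, hk⟩ := (hlim.eventually (gt_mem_nhds hs)).exists
  exact band_mono hk.le (hpow k)

end PositiveLinearMap

namespace Matrix

variable {𝕜 n : Type*} [RCLike 𝕜] [Fintype n]

lemma isClosed_setOf_posSemidef : IsClosed {M : Matrix n n 𝕜 | M.PosSemidef} := by
  simp_rw [posSemidef_iff_dotProduct_mulVec, ofPred_and, ofPred_forall]
  exact (isClosed_eq continuous_id.matrix_conjTranspose continuous_id).inter
    (isClosed_iInter fun x => isClosed_le continuous_const (by fun_prop))

lemma le_of_forall_pos_le_add_smul {Y Z Q : Matrix n n 𝕜} (h : ∀ s : ℝ, 0 < s → Y ≤ Z + s • Q) :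
    Y ≤ Z := by
  have hcont : Tendsto (fun s : ℝ => Z + s • Q - Y) (nhdsWithin 0 (Ioi 0)) (nhds (Z - Y)) := by
    have : Continuous (fun s : ℝ => Z + s • Q - Y) := by fun_prop
    simpa using (this.tendsto 0).mono_left nhdsWithin_le_nhds
  exact isClosed_setOf_posSemidef.mem_of_tendsto hcont
    (eventually_nhdsWithin_of_forall fun s hs => h s hs)

lemma IsHermitian.exists_le_smul_one [DecidableEq n] {Y : Matrix n n 𝕜} (hY : Y.IsHermitian) :
    ∃ r : ℝ, Y ≤ r • 1 := by
  obtain ⟨r, hr⟩ := Y.finite_real_spectrum.bddAbove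
  refine ⟨r, ?_⟩
  simpa [Algebra.algebraMap_eq_smul_one] using
    le_algebraMap_of_spectrum_le (R := ℝ) (fun x hx => hr hx) hY.isSelfAdjoint

lemma PosDef.exists_pos_smul_one_le [DecidableEq n] {Q : Matrix n n 𝕜} (hQ : Q.PosDef) :
    ∃ δ : ℝ, 0 < δ ∧ δ • 1 ≤ Q := by
  have hpos : ∀ x ∈ spectrum ℝ Q, 0 < x := by
    rw [hQ.1.spectrum_real_eq_range_eigenvalues]
    rintro _ ⟨i, rfl⟩
    exact hQ.eigenvalues_pos i
  obtain ⟨δ, hδ, hδle⟩ := (insert 1 (spectrum ℝ Q)).exists_min_image id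
    (Q.finite_real_spectrum.insert 1) (insert_nonempty _ _)
  refine ⟨δ, ?_, ?_⟩
  · rcases hδ with rfl | hδ
    exacts [one_pos, hpos δ hδ]
  · simpa [Algebra.algebraMap_eq_smul_one] using algebraMap_le_of_le_spectrum (R := ℝ)
      (fun x hx => hδle x (mem_insert_of_mem 1 hx)) hQ.1.isSelfAdjoint

lemma PosDef.exists_le_smul [DecidableEq n] {Q Y : Matrix n n 𝕜} (hQ : Q.PosDef)
    (hY : Y.IsHermitian) : ∃ t : ℝ, Y ≤ t • Q := by
  obtain ⟨r, hr⟩ := hY.exists_le_smul_one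
  obtain ⟨δ, hδ, hδQ⟩ := hQ.exists_pos_smul_one_le
  refine ⟨|r| / δ, ?_⟩
  calc Y ≤ r • 1 := hr
    _ ≤ |r| • 1 := smul_le_smul_of_nonneg_right (le_abs_self r) PosSemidef.one.nonneg
    _ = (|r| / δ) • δ • (1 : Matrix n n 𝕜) := by rw [smul_smul, div_mul_cancel₀ _ hδ.ne']
    _ ≤ (|r| / δ) • Q := smul_le_smul_of_nonneg_left hδQ (by positivity)

lemma exists_lt_one_smul_le_of_posDef_sub [DecidableEq n] {Q M : Matrix n n 𝕜} (hQ : Q.IsHermitian)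
    (hM : (Q - M).PosDef) : ∃ α : ℝ, α < 1 ∧ M ≤ α • Q := by
  obtain ⟨t, ht⟩ := hM.exists_le_smul hQ
  refine ⟨1 - (max t 1)⁻¹, sub_lt_self 1 (by positivity), ?_⟩
  have : (max t 1)⁻¹ • Q ≤ Q - M := by
    calc (max t 1)⁻¹ • Q ≤ (max t 1)⁻¹ • (max t 1 • (Q - M)) := by
          gcongr
          exact ht.trans (smul_le_smul_of_nonneg_right (le_max_left t 1) hM.posSemidef.nonneg)
      _ = Q - M := by rw [smul_smul, inv_mul_cancel₀ (by positivity), one_smul]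
  rw [sub_smul, one_smul]
  exact le_sub_comm.1 this

def conjPairMap {C D : Matrix n n 𝕜} (hC : C.IsHermitian) (hD : D.IsHermitian) :
    Matrix n n 𝕜 →ₚ[ℝ] Matrix n n 𝕜 where
  toFun X := 2 • (C * X * C + D * X * D)
  map_add' X Y := by simp only [mul_add, add_mul]; abel
  map_smul' r X := by
    simp only [Matrix.mul_smul, Matrix.smul_mul, RingHom.id_apply, smul_add, smul_comm r]
  monotone' _ _ h := nsmul_le_nsmul_right (add_le_add (hC.isSelfAdjoint.conjugate_le_conjugate h)
    (hD.isSelfAdjoint.conjugate_le_conjugate h)) 2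

variable [DecidableEq n]

lemma two_nsmul_conj_sub_two_nsmul_conj {A B U V W : Matrix n n ℂ}
    (hU : U = ((Real.sqrt 2 : ℂ))⁻¹ • (A - B + 1)) (hV : V = ((Real.sqrt 2 : ℂ))⁻¹ • (A + B + 1))
    (hW : W = B - 1) (X : Matrix n n ℂ) :
    2 • (V * X * V + W * X * W) - 2 • (U * X * U + B * X * B) =
      2 • (A * X * B + B * X * A + X) := by
  have hsq : ((Real.sqrt 2 : ℂ))⁻¹ ^ 2 = 2⁻¹ := by
    rw [inv_pow, ← Complex.ofReal_pow, Real.sq_sqrt zero_le_two, Complex.ofReal_ofNat]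
  subst hU hV hW
  simp only [smul_mul_assoc, mul_smul_comm, add_mul, mul_add, sub_mul, mul_sub,
    one_mul, mul_one]
  match_scalars <;> ring_nf <;> simp only [hsq] <;> norm_num

lemma exists_isHermitian_of_injOn {A B Y : Matrix n n 𝕜} (hA : A.IsHermitian)
    (hB : B.IsHermitian) (hY : Y.IsHermitian)
    (hinj : InjOn (fun X => A * X * B + B * X * A) {X | X.IsHermitian}) :
    ∃ X, X.IsHermitian ∧ A * X * B + B * X * A = Y := by
  let f : Matrix n n 𝕜 →ₗ[ℝ] Matrix n n 𝕜 :=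
    LinearMap.mulLeftRight ℝ (A, B) + LinearMap.mulLeftRight ℝ (B, A)
  have hmaps : ∀ X ∈ selfAdjoint.submodule ℝ (Matrix n n 𝕜),
      f X ∈ selfAdjoint.submodule ℝ (Matrix n n 𝕜) := by
    intro X (hX : IsSelfAdjoint X)
    change IsSelfAdjoint (A * X * B + B * X * A)
    rw [IsSelfAdjoint, star_add, star_mul, star_mul, star_mul, star_mul, hA.isSelfAdjoint.star_eq,
      hB.isSelfAdjoint.star_eq, hX.star_eq, ← mul_assoc, ← mul_assoc, add_comm]
  exact (LinearMap.injOn_iff_surjOn hmaps).1 hinj hY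

theorem mem_Icc_of_sub_eq_two_nsmul (Φ Ψ : Matrix n n 𝕜 →ₚ[ℝ] Matrix n n 𝕜)
    {P R X : Matrix n n 𝕜} (hP : P.PosDef) (hΦP : (P - Φ P).PosDef) (hΨP : (P - Ψ P).PosDef)
    (hR : R.IsHermitian) (hΦR : Φ R ≤ R) (hΨR : Ψ R ≤ R) (hX : X.IsHermitian)
    (hXR : Ψ X - Φ X = 2 • (X - R)) : X ∈ Icc (R - Φ R) (R + Ψ R) := by
  obtain ⟨α, hα, hΦα⟩ := exists_lt_one_smul_le_of_posDef_sub hP.1 hΦP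
  obtain ⟨β, hβ, hΨβ⟩ := exists_lt_one_smul_le_of_posDef_sub hP.1 hΨP
  have hL : (R - Φ R).IsHermitian := (le_iff.1 hΦR).1
  have hH : (R + Ψ R).IsHermitian := by
    simpa using (hR.add hR).sub (le_iff.1 hΨR).1
  have h₀ : ∃ t : ℝ, X ∈ Icc (R - Φ R - t • P) (R + Ψ R + t • P) := by
    obtain ⟨t₁, ht₁⟩ := hP.exists_le_smul (hL.sub hX)
    obtain ⟨t₂, ht₂⟩ := hP.exists_le_smul (hX.sub hH)
    have hP0 := hP.posSemidef.nonneg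
    refine ⟨max t₁ t₂, sub_le_comm.1 ?_, sub_le_iff_le_add'.1 ?_⟩
    · exact ht₁.trans (smul_le_smul_of_nonneg_right (le_max_left _ _) hP0)
    · exact ht₂.trans (smul_le_smul_of_nonneg_right (le_max_right _ _) hP0)
  have hband (s : ℝ) (hs : 0 < s) := PositiveLinearMap.mem_Icc_smul_of_sub_eq_two_nsmul Φ Ψ
    hP.posSemidef.nonneg hα hβ hΦα hΨβ hΦR hΨR hXR h₀ hs
  exact ⟨le_of_forall_pos_le_add_smul fun s hs => sub_le_iff_le_add.1 (hband s hs).1,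
    le_of_forall_pos_le_add_smul fun s hs => (hband s hs).2⟩

theorem eq_zero_of_sub_eq_two_nsmul (Φ Ψ : Matrix n n 𝕜 →ₚ[ℝ] Matrix n n 𝕜)
    {P D : Matrix n n 𝕜} (hP : P.PosDef) (hΦP : (P - Φ P).PosDef) (hΨP : (P - Ψ P).PosDef)
    (hD : D.IsHermitian) (hDeq : Ψ D - Φ D = 2 • D) : D = 0 := by
  have h := mem_Icc_of_sub_eq_two_nsmul Φ Ψ hP hΦP hΨP isHermitian_zero (by simp) (by simp) hD
    (by rwa [sub_zero])
  simp only [map_zero, sub_zero, add_zero] at h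
  exact le_antisymm h.2 h.1

end Matrix

theorem stmt10 {N : ℕ} (A B Q : Matrix (Fin N) (Fin N) ℂ)
    (hA : A.IsHermitian) (hB : B.IsHermitian) (hQ : Q.PosDef)
    (U V W : Matrix (Fin N) (Fin N) ℂ)
    (hU : U = ((Real.sqrt 2 : ℂ))⁻¹ • (A - B + 1))
    (hV : V = ((Real.sqrt 2 : ℂ))⁻¹ • (A + B + 1))
    (hW : W = B - 1)
    (hb : (Q - 2 • (U * Q * U + B * Q * B)).PosDef)
    (hc : (Q - 2 • (V * Q * V + W * Q * W)).PosDef) :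
    (∃! X : Matrix (Fin N) (Fin N) ℂ, X.PosDef ∧ A * X * B + B * X * A = -Q) ∧
    ∀ X : Matrix (Fin N) (Fin N) ℂ, X.PosDef → A * X * B + B * X * A = -Q →
      (X - (Q - 2 • (U * Q * U + B * Q * B))).PosSemidef ∧
      ((Q + 2 • (V * Q * V + W * Q * W)) - X).PosSemidef := by
  have hs : IsSelfAdjoint ((Real.sqrt 2 : ℂ))⁻¹ := by simp [IsSelfAdjoint, Complex.conj_ofReal]
  have hU' : U.IsHermitian := hU ▸ hs.smul ((hA.sub hB).add isHermitian_one)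
  have hV' : V.IsHermitian := hV ▸ hs.smul ((hA.add hB).add isHermitian_one)
  have hW' : W.IsHermitian := hW ▸ hB.sub isHermitian_one
  set Φ := conjPairMap hU' hB
  set Ψ := conjPairMap hV' hW'
  change (Q - Φ Q).PosDef at hb
  change (Q - Ψ Q).PosDef at hc
  have hΨΦ (X) : Ψ X - Φ X = 2 • (A * X * B + B * X * A + X) :=
    two_nsmul_conj_sub_two_nsmul_conj hU hV hW X
  have hbounds (X) (hX : X.IsHermitian) (hXeq : A * X * B + B * X * A = -Q) :
      X ∈ Icc (Q - Φ Q) (Q + Ψ Q) :=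
    mem_Icc_of_sub_eq_two_nsmul Φ Ψ hQ hb hc hQ.1 (le_iff.2 hb.posSemidef)
      (le_iff.2 hc.posSemidef) hX (by rw [hΨΦ, hXeq, neg_add_eq_sub])
  have hinj : InjOn (fun X => A * X * B + B * X * A) {X | X.IsHermitian} := by
    intro X hX Y hY (hXY : A * X * B + B * X * A = A * Y * B + B * Y * A)
    refine sub_eq_zero.1 (eq_zero_of_sub_eq_two_nsmul Φ Ψ hQ hb hc (hX.sub hY) ?_)
    rw [hΨΦ, mul_sub, sub_mul, mul_sub, sub_mul, sub_add_sub_comm, hXY, sub_self, zero_add]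
  obtain ⟨X, hXh, hX⟩ := exists_isHermitian_of_injOn hA hB hQ.1.neg hinj
  have hXpos : X.PosDef := by
    simpa only [add_sub_cancel] using hb.add_posSemidef (hbounds X hXh hX).1
  exact ⟨⟨X, ⟨hXpos, hX⟩, fun Y hY => hinj hY.1.1 hXh (hY.2.trans hX.symm)⟩,
    fun Y hY hYeq => hbounds Y hY.1 hYeq⟩
end

section
/- Let (Δ, ≤, d) be a complete partially ordered metric space and F : Δ × Δ → Δ a continuous mixed monotone mapping such that d(F(x,y), F(u,v)) ≤ (δ/2)[d(x,u) + d(y,v)] for all x ≥ u, y ≤ v, for some δ ∈ [0,1). Suppose there exist x₀ ≤ F(x₀,y₀) and y₀ ≥ F(y₀,x₀), and every pair of elements of Δ has an upper bound or a lower bound. Then there is a unique x̄ ∈ Δ with x̄ = F(x̄, x̄), and the sequences x_{n+1} = F(xₙ, yₙ), y_{n+1} = F(yₙ, xₙ) converge to x̄ with max{d(xₙ, x̄), d(yₙ, x̄)} ≤ (δⁿ/(1−δ)) max{d(x₀,x₁), d(y₀,y₁)}. -/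
open Matrix Filter
open scoped ComplexOrder

/-!
On `Δ × Δ` with the sup metric, the coupled map `T (x, y) = (F x y, F y x)` preserves the mixed
order `(x, y) ≼ (u, v) ↔ x ≤ u ∧ v ≤ y` and is a `δ`-contraction on `≼`-related pairs. Picard
iteration from `(x₀, y₀) ≼ T (x₀, y₀)` is then geometrically Cauchy and converges to a fixed point
of `T`. Orbits of two points joined by a zigzag of `≼`-relations approach each other, so fixed
points of `T` joined by such a zigzag coincide; the bound hypothesis joins any two points of
`Δ × Δ`, so `T` has exactly one fixed point `L`. As `L.swap` is fixed too, `L = (x̄, x̄)`.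
-/

open Topology Function

section RelContraction

variable {X : Type*} {T : X → X} {r : X → X → Prop}

theorem rel_iterate (hmap : ∀ a b, r a b → r (T a) (T b)) {a b : X} (h : r a b) (n : ℕ) :
    r (T^[n] a) (T^[n] b) := by
  induction n with
  | zero => exact h
  | succ n ih => simpa only [iterate_succ_apply'] using hmap _ _ ih

section PseudoMetric

variable [PseudoMetricSpace X] {δ : ℝ}

theorem dist_iterate_le_of_rel (hδ0 : 0 ≤ δ) (hmap : ∀ a b, r a b → r (T a) (T b))
    (hcontr : ∀ a b, r a b → dist (T a) (T b) ≤ δ * dist a b) {a b : X} (h : r a b) (n : ℕ) :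
    dist (T^[n] a) (T^[n] b) ≤ δ ^ n * dist a b := by
  induction n with
  | zero => simp
  | succ n ih =>
    rw [iterate_succ_apply', iterate_succ_apply', pow_succ', mul_assoc]
    exact (hcontr _ _ (rel_iterate hmap h n)).trans (mul_le_mul_of_nonneg_left ih hδ0)

theorem tendsto_dist_iterate_of_eqvGen (hδ0 : 0 ≤ δ) (hδ1 : δ < 1)
    (hmap : ∀ a b, r a b → r (T a) (T b))
    (hcontr : ∀ a b, r a b → dist (T a) (T b) ≤ δ * dist a b) {a b : X}
    (h : Relation.EqvGen r a b) : Tendsto (fun n => dist (T^[n] a) (T^[n] b)) atTop (𝓝 0) := by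
  induction h with
  | rel a b hab =>
    have hgeom := (tendsto_pow_atTop_nhds_zero_of_lt_one hδ0 hδ1).mul_const (dist a b)
    rw [zero_mul] at hgeom
    exact squeeze_zero (fun _ => dist_nonneg) (dist_iterate_le_of_rel hδ0 hmap hcontr hab) hgeom
  | refl a => simp
  | symm a b _ ih => simpa only [dist_comm] using ih
  | trans a b c _ _ ihab ihbc =>
    have hsum := ihab.add ihbc
    rw [add_zero] at hsum
    exact squeeze_zero (fun _ => dist_nonneg) (fun _ => dist_triangle _ _ _) hsum

end PseudoMetric

theorem eq_of_eqvGen_of_isFixedPt [MetricSpace X] {δ : ℝ} (hδ0 : 0 ≤ δ) (hδ1 : δ < 1)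
    (hmap : ∀ a b, r a b → r (T a) (T b))
    (hcontr : ∀ a b, r a b → dist (T a) (T b) ≤ δ * dist a b) {a b : X}
    (h : Relation.EqvGen r a b) (ha : IsFixedPt T a) (hb : IsFixedPt T b) : a = b := by
  have hlim := tendsto_dist_iterate_of_eqvGen hδ0 hδ1 hmap hcontr h
  simp only [iterate_fixed ha, iterate_fixed hb] at hlim
  exact dist_eq_zero.mp (tendsto_nhds_unique tendsto_const_nhds hlim)

theorem exists_isFixedPt_tendsto_of_rel [MetricSpace X] [CompleteSpace X] {δ : ℝ} (hδ0 : 0 ≤ δ)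
    (hδ1 : δ < 1) (hT : Continuous T) (hmap : ∀ a b, r a b → r (T a) (T b))
    (hcontr : ∀ a b, r a b → dist (T a) (T b) ≤ δ * dist a b) {x : X} (hx : r x (T x)) :
    ∃ L, IsFixedPt T L ∧ Tendsto (fun n => T^[n] x) atTop (𝓝 L) ∧
      ∀ n, dist (T^[n] x) L ≤ dist x (T x) * δ ^ n / (1 - δ) := by
  have hstep : ∀ n, dist (T^[n] x) (T^[n + 1] x) ≤ dist x (T x) * δ ^ n := fun n => by
    rw [iterate_succ_apply, mul_comm]
    exact dist_iterate_le_of_rel hδ0 hmap hcontr hx n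
  obtain ⟨L, hL⟩ := cauchySeq_tendsto_of_complete (cauchySeq_of_le_geometric δ _ hδ1 hstep)
  have hfix : T L = L := by
    refine tendsto_nhds_unique ((hT.tendsto L).comp hL) ?_
    simpa only [comp_def, ← iterate_succ_apply' T] using hL.comp (tendsto_add_atTop_nat 1)
  exact ⟨L, hfix, hL, dist_le_of_le_geometric_of_tendsto δ _ hδ1 hstep hL⟩

end RelContraction

section Coupled

variable {Δ : Type*}

def MixedLE [LE Δ] (p q : Δ × Δ) : Prop :=
  p.1 ≤ q.1 ∧ q.2 ≤ p.2

def coupledMap (F : Δ → Δ → Δ) (p : Δ × Δ) : Δ × Δ :=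
  (F p.1 p.2, F p.2 p.1)

theorem coupledMap_swap (F : Δ → Δ → Δ) (p : Δ × Δ) :
    coupledMap F p.swap = (coupledMap F p).swap :=
  rfl

theorem continuous_coupledMap [TopologicalSpace Δ] {F : Δ → Δ → Δ}
    (hF : Continuous fun p : Δ × Δ => F p.1 p.2) : Continuous (coupledMap F) :=
  hF.prodMk (hF.comp continuous_swap)

theorem mixedLE_coupledMap [LE Δ] {F : Δ → Δ → Δ}
    (hmono : ∀ x y u v : Δ, x ≤ u → v ≤ y → F x y ≤ F u v) {p q : Δ × Δ} (h : MixedLE p q) :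
    MixedLE (coupledMap F p) (coupledMap F q) :=
  ⟨hmono _ _ _ _ h.1 h.2, hmono _ _ _ _ h.2 h.1⟩

theorem dist_coupledMap_le [LE Δ] [PseudoMetricSpace Δ] {F : Δ → Δ → Δ} {δ : ℝ} (hδ0 : 0 ≤ δ)
    (hcontr : ∀ x y u v : Δ, u ≤ x → y ≤ v →
      dist (F x y) (F u v) ≤ δ / 2 * (dist x u + dist y v))
    {p q : Δ × Δ} (h : MixedLE p q) :
    dist (coupledMap F p) (coupledMap F q) ≤ δ * dist p q := by
  have hmean : δ / 2 * (dist p.1 q.1 + dist p.2 q.2) ≤ δ * dist p q := by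
    rw [Prod.dist_eq]
    nlinarith [le_max_left (dist p.1 q.1) (dist p.2 q.2),
      le_max_right (dist p.1 q.1) (dist p.2 q.2)]
  have h₁ := hcontr _ _ _ _ h.1 h.2
  have h₂ := hcontr _ _ _ _ h.2 h.1
  rw [dist_comm q.1, dist_comm q.2] at h₁
  change max (dist (F p.1 p.2) (F q.1 q.2)) (dist (F p.2 p.1) (F q.2 q.1)) ≤ _
  rw [dist_comm (F p.1 p.2)]
  exact max_le (h₁.trans hmean) (by linarith)

theorem eqvGen_mixedLE [Preorder Δ]
    (hbound : ∀ a b : Δ, ∃ c : Δ, (a ≤ c ∧ b ≤ c) ∨ (c ≤ a ∧ c ≤ b)) (p q : Δ × Δ) :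
    Relation.EqvGen MixedLE p q := by
  have hfst : ∀ a a' b : Δ, Relation.EqvGen MixedLE (a, b) (a', b) := by
    intro a a' b
    obtain ⟨c, ⟨hac, ha'c⟩ | ⟨hca, hca'⟩⟩ := hbound a a'
    · exact .trans _ (c, b) _ (.rel _ _ ⟨hac, le_rfl⟩) (.symm _ _ (.rel _ _ ⟨ha'c, le_rfl⟩))
    · exact .trans _ (c, b) _ (.symm _ _ (.rel _ _ ⟨hca, le_rfl⟩)) (.rel _ _ ⟨hca', le_rfl⟩)
  have hsnd : ∀ a b b' : Δ, Relation.EqvGen MixedLE (a, b) (a, b') := by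
    intro a b b'
    obtain ⟨c, ⟨hbc, hb'c⟩ | ⟨hcb, hcb'⟩⟩ := hbound b b'
    · exact .trans _ (a, c) _ (.symm _ _ (.rel _ _ ⟨le_rfl, hbc⟩)) (.rel _ _ ⟨le_rfl, hb'c⟩)
    · exact .trans _ (a, c) _ (.rel _ _ ⟨le_rfl, hcb⟩) (.symm _ _ (.rel _ _ ⟨le_rfl, hcb'⟩))
  exact .trans _ (q.1, p.2) _ (hfst _ _ _) (hsnd _ _ _)

end Coupled

theorem stmt15 {Δ : Type*} [PartialOrder Δ] [MetricSpace Δ] [CompleteSpace Δ]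
    (F : Δ → Δ → Δ) (hFc : Continuous fun p : Δ × Δ => F p.1 p.2)
    (hmono : ∀ x y u v : Δ, x ≤ u → v ≤ y → F x y ≤ F u v)
    (δ : ℝ) (hδ0 : 0 ≤ δ) (hδ1 : δ < 1)
    (hcontr : ∀ x y u v : Δ, u ≤ x → y ≤ v →
      dist (F x y) (F u v) ≤ δ / 2 * (dist x u + dist y v))
    (x₀ y₀ : Δ) (hx₀ : x₀ ≤ F x₀ y₀) (hy₀ : F y₀ x₀ ≤ y₀)
    (hbound : ∀ a b : Δ, ∃ c : Δ, (a ≤ c ∧ b ≤ c) ∨ (c ≤ a ∧ c ≤ b)) :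
    ∃ xb : Δ, F xb xb = xb ∧ (∀ z : Δ, F z z = z → z = xb) ∧
      ∀ x y : ℕ → Δ, x 0 = x₀ → y 0 = y₀ →
        (∀ n, x (n + 1) = F (x n) (y n)) → (∀ n, y (n + 1) = F (y n) (x n)) →
        Tendsto x atTop (nhds xb) ∧ Tendsto y atTop (nhds xb) ∧
        ∀ n, max (dist (x n) xb) (dist (y n) xb) ≤
          δ ^ n / (1 - δ) * max (dist (x 0) (x 1)) (dist (y 0) (y 1)) := by
  have hmap : ∀ p q, MixedLE p q → MixedLE (coupledMap F p) (coupledMap F q) :=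
    fun _ _ => mixedLE_coupledMap hmono
  have hTcontr : ∀ p q, MixedLE p q → dist (coupledMap F p) (coupledMap F q) ≤ δ * dist p q :=
    fun _ _ => dist_coupledMap_le hδ0 hcontr
  obtain ⟨⟨a, b⟩, hfix, hconv, hrate⟩ := exists_isFixedPt_tendsto_of_rel hδ0 hδ1
    (continuous_coupledMap hFc) hmap hTcontr (x := (x₀, y₀)) ⟨hx₀, hy₀⟩
  have huniq : ∀ p, IsFixedPt (coupledMap F) p → p = (a, b) := fun p hp =>
    eq_of_eqvGen_of_isFixedPt hδ0 hδ1 hmap hTcontr (eqvGen_mixedLE hbound p _) hp hfix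
  obtain rfl : a = b := congrArg Prod.snd (huniq (b, a) (by
    rw [IsFixedPt, ← Prod.swap_prod_mk, coupledMap_swap, hfix]))
  refine ⟨a, congrArg Prod.fst hfix, fun z hz => congrArg Prod.fst (huniq (z, z) (by
    simp only [IsFixedPt, coupledMap, hz])), ?_⟩
  intro x y hx0 hy0 hxs hys
  have horbit : ∀ n, (coupledMap F)^[n] (x₀, y₀) = (x n, y n) := fun n => by
    induction n with
    | zero => simp [hx0, hy0]
    | succ n ih => rw [iterate_succ_apply', ih, hxs, hys]; rfl
  simp only [horbit] at hconv hrate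
  refine ⟨hconv.fst_nhds, hconv.snd_nhds, fun n => ?_⟩
  have h := hrate n
  rw [← iterate_one (coupledMap F), horbit 1, ← hx0, ← hy0, mul_div_assoc, mul_comm] at h
  simpa only [Prod.dist_eq] using h
end
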